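/- arXiv:2307.06748 — 9 statements merged into one kernel-verified Lean document; each statement's English description precedes it below -/
import Mathlib

section
/- If X is an S[μ_n]-generator of a ring R (every element of R is uniquely a finite sum Σ_j ι(α_j) X^j with α_j ∈ μ_n ∪ {0}, where ι : μ_n → R^× is an injective group homomorphism), and m is a positive integer, then the class of Y in R[Y]/(Y^m − X) is an S[μ_n]-generator of R[Y]/(Y^m − X). -/
/-- `X` is an `𝕊[μₙ₊]`-generator of `R` relative to `ι : μₙ →* Rˣ`:
every element of `R` is uniquely a finite sum `Σ_j ι(α_j) X^j` with
coefficients `α_j ∈ μₙ ∪ {0}` (a digit is either `0` or of the form `ι g`). -/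
def IsSGenerator {R : Type*} [CommRing R] {G : Type*} [Group G]
    (ι : G →* Rˣ) (X : R) : Prop :=
  ∀ z : R, ∃! f : ℕ →₀ R,
    (∀ j, f j = 0 ∨ ∃ g : G, f j = (ι g : R)) ∧
    (f.sum fun j a => a * X ^ j) = z

/-!
Let `y` be the class of `Y`. Since `y ^ m = X`, a base-`y` expansion `Σ_k f_k y ^ k` regroups by
the residue of `k` mod `m` as `Σ_{i < m} (Σ_j f_{jm+i} X ^ j) y ^ i`. As `1, y, …, y ^ (m - 1)` is an
`R`-basis of `R[Y]/(Y ^ m - X)`, base-`y` expansions of an element thus correspond bijectively to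
`m`-tuples of base-`X` expansions of its coordinates. The digits of `R[Y]/(Y ^ m - X)` are the
images of those of `R`, which embeds into it.
-/

open Function Finsupp

theorem Function.Injective.existsUnique_and_iff {α β : Type*} {g : α → β} (hg : Injective g)
    {A : α → Prop} {B P : β → Prop} (hAB : ∀ b, B b ↔ ∃ a, A a ∧ g a = b) :
    (∃! b, B b ∧ P b) ↔ ∃! a, A a ∧ P (g a) := by
  constructor
  · rintro ⟨_, ⟨hB, hP⟩, huniq⟩
    obtain ⟨a, hA, rfl⟩ := (hAB _).1 hB
    exact ⟨a, ⟨hA, hP⟩, fun a' ⟨hA', hP'⟩ => hg (huniq _ ⟨(hAB _).2 ⟨a', hA', rfl⟩, hP'⟩)⟩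
  · rintro ⟨a, ⟨hA, hP⟩, huniq⟩
    refine ⟨g a, ⟨(hAB _).2 ⟨a, hA, rfl⟩, hP⟩, fun b ⟨hB, hP'⟩ => ?_⟩
    obtain ⟨a', hA', rfl⟩ := (hAB b).1 hB
    rw [huniq a' ⟨hA', hP'⟩]

theorem ExistsUnique.pi {ι : Type*} {β : ι → Type*} {P : ∀ i, β i → Prop}
    (h : ∀ i, ∃! b, P i b) : ∃! f : ∀ i, β i, ∀ i, P i (f i) := by
  choose f hf huniq using h
  exact ⟨f, hf, fun g hg => funext fun i => huniq i _ (hg i)⟩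

namespace Finsupp

variable {M : Type*} [Zero M] (m : ℕ) [NeZero m]

noncomputable def natDivModEquiv : (ℕ →₀ M) ≃ (Fin m → ℕ →₀ M) :=
  (equivCongrLeft ((Nat.divModEquiv m).trans (Equiv.prodComm _ _))).trans
    (curryEquiv.trans equivFunOnFinite)

@[simp]
theorem natDivModEquiv_apply (F : ℕ →₀ M) (i : Fin m) (j : ℕ) :
    natDivModEquiv m F i j = F (j * m + i) := by
  simp [natDivModEquiv]

theorem forall_natDivModEquiv_apply_iff (F : ℕ →₀ M) (P : M → Prop) :
    (∀ i j, P (natDivModEquiv m F i j)) ↔ ∀ k, P (F k) := by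
  refine ⟨fun h k => ?_, fun h i j => h _⟩
  simpa [Nat.div_add_mod'] using h (Fin.ofNat m k) (k / m)

theorem sum_natDivModEquiv {N : Type*} [AddCommMonoid N] (F : ℕ →₀ M) (g : ℕ → M → N) :
    F.sum g = ∑ i, (natDivModEquiv m F i).sum fun j a => g (j * m + i) a := by
  set σ := (Nat.divModEquiv m).trans (Equiv.prodComm _ _)
  calc F.sum g = (equivMapDomain σ F).sum fun p a => g (σ.symm p) a := by
        simp [sum_equivMapDomain]
    _ = (equivMapDomain σ F).curry.sum fun i f => f.sum fun j a => g (σ.symm (i, j)) a :=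
        (sum_curry_index _ fun i j a => g (σ.symm (i, j)) a).symm
    _ = _ := sum_fintype _ _ fun _ => sum_zero_index

end Finsupp

section DigitBase

variable {R S : Type*} [CommRing R] [CommRing S] [Algebra R S]

def IsDigitBase (D : Set R) (y : S) : Prop :=
  ∀ z : S, ∃! f : ℕ →₀ R, (∀ j, f j ∈ D) ∧ (f.sum fun j a => a • y ^ j) = z

theorem Module.Basis.sum_smul_eq_iff {ι : Type*} [Fintype ι] (b : Module.Basis ι R S)
    (c : ι → R) (z : S) : ∑ i, c i • b i = z ↔ ∀ i, c i = b.repr z i := by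
  rw [← b.equivFun_symm_apply, LinearEquiv.symm_apply_eq, funext_iff]
  rfl

theorem PowerBasis.algebraMap_injective (pb : PowerBasis R S) [NeZero pb.dim] :
    Injective (algebraMap R S) := by
  have hone : pb.basis ⟨0, Nat.pos_of_neZero _⟩ = 1 := by simp [pb.basis_eq_pow]
  intro r s h
  rw [Algebra.algebraMap_eq_smul_one, Algebra.algebraMap_eq_smul_one, ← hone] at h
  simpa only [map_smul, pb.basis.repr_self, Finsupp.smul_apply, Finsupp.single_eq_same,
    smul_eq_mul, mul_one] using congr(pb.basis.repr $h ⟨0, Nat.pos_of_neZero _⟩)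

theorem IsDigitBase.of_powerBasis {D : Set R} {X : R} (hX : IsDigitBase D X)
    (pb : PowerBasis R S) [NeZero pb.dim] (hgen : pb.gen ^ pb.dim = algebraMap R S X) :
    IsDigitBase D pb.gen := by
  intro z
  have hsum : ∀ F : ℕ →₀ R, (F.sum fun k a => a • pb.gen ^ k) =
      ∑ i, ((natDivModEquiv pb.dim F i).sum fun j a => a • X ^ j) • pb.basis i := by
    intro F
    rw [sum_natDivModEquiv pb.dim]
    refine Finset.sum_congr rfl fun i _ => ?_
    rw [pb.basis_eq_pow, Finsupp.sum, Finsupp.sum, Finset.sum_smul]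
    refine Finset.sum_congr rfl fun j _ => ?_
    rw [pow_add, pow_mul', hgen, ← map_pow, smul_eq_mul, Algebra.smul_def, Algebra.smul_def,
      map_mul]
    ring
  refine ((natDivModEquiv pb.dim).existsUnique_congr fun F => ?_).2
    (ExistsUnique.pi fun i => hX (pb.basis.repr z i))
  rw [hsum, pb.basis.sum_smul_eq_iff, ← forall_natDivModEquiv_apply_iff pb.dim, ← forall_and]

theorem AdjoinRoot.root_X_pow_sub_C_pow (m : ℕ) (a : R) :
    root (Polynomial.X ^ m - Polynomial.C a) ^ m = algebraMap R _ a := by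
  rw [← sub_eq_zero, ← AdjoinRoot.eval₂_root, Polynomial.eval₂_sub, Polynomial.eval₂_C,
    Polynomial.eval₂_pow, Polynomial.eval₂_X]
  rfl

section SGenerator

variable {G : Type*} [Group G]

def digitSet (ι : G →* Rˣ) : Set R := {r | r = 0 ∨ ∃ g, r = ι g}

theorem isSGenerator_iff_isDigitBase (ι : G →* Rˣ) (X : R) :
    IsSGenerator ι X ↔ IsDigitBase (digitSet ι) X :=
  Iff.rfl

theorem IsSGenerator.of_subsingleton [Subsingleton R] (ι : G →* Rˣ) (X : R) :
    IsSGenerator ι X :=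
  fun _ => ⟨0, ⟨fun _ => Or.inl rfl, Subsingleton.elim _ _⟩, fun _ _ => Subsingleton.elim _ _⟩

theorem isSGenerator_unitsMap_comp_iff (hφ : Injective (algebraMap R S)) (ι : G →* Rˣ) (y : S) :
    IsSGenerator ((Units.map (algebraMap R S).toMonoidHom).comp ι) y ↔
      IsDigitBase (digitSet ι) y := by
  refine forall_congr' fun z => ?_
  rw [(mapRange_injective _ (map_zero _) hφ).existsUnique_and_iff
    (A := fun f => ∀ j, f j ∈ digitSet ι) fun F => ?_]
  · simp only [sum_mapRange_index, zero_mul, implies_true, Algebra.smul_def]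
  simp only [MonoidHom.comp_apply, Units.coe_map]
  constructor
  · intro hF
    have hinv : invFun (algebraMap R S) 0 = 0 := by
      simpa using leftInverse_invFun hφ 0
    refine ⟨F.mapRange _ hinv, fun j => ?_, ?_⟩
    · rcases hF j with h | ⟨g, h⟩
      · exact Or.inl (by simp [h, hinv])
      · exact Or.inr ⟨g, by simp [h, leftInverse_invFun hφ _]⟩
    · ext j
      rcases hF j with h | ⟨g, h⟩ <;> simp [h, hinv, leftInverse_invFun hφ _]
  · rintro ⟨f, hf, rfl⟩ j
    rcases hf j with h | ⟨g, h⟩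
    · exact Or.inl (by simp [h])
    · exact Or.inr ⟨g, by simp [h]⟩

end SGenerator

end DigitBase

theorem root_isSGenerator_adjoinRoot_general {R : Type*} [CommRing R]
    {G : Type*} [CommGroup G] (ι : G →* Rˣ)
    (X : R) (hX : IsSGenerator ι X) (m : ℕ) (hm : 0 < m) :
    IsSGenerator
      ((Units.map (algebraMap R
          (AdjoinRoot ((Polynomial.X : Polynomial R) ^ m - Polynomial.C X))).toMonoidHom).comp ι)
      (AdjoinRoot.root ((Polynomial.X : Polynomial R) ^ m - Polynomial.C X)) := by
  set q := (Polynomial.X : Polynomial R) ^ m - Polynomial.C X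
  -- over the zero ring `Y ^ m - X` has degree `0`, not `m`
  rcases subsingleton_or_nontrivial R with hR | hR
  · have : Subsingleton (AdjoinRoot q) := AdjoinRoot.mk_surjective.subsingleton
    exact IsSGenerator.of_subsingleton _ _
  set pb := AdjoinRoot.powerBasis' (Polynomial.monic_X_pow_sub_C X hm.ne')
  have hdim : pb.dim = m := Polynomial.natDegree_X_pow_sub_C
  have : NeZero pb.dim := ⟨hdim.trans_ne hm.ne'⟩
  have hgen : pb.gen ^ pb.dim = algebraMap R _ X := by
    rw [hdim, AdjoinRoot.powerBasis'_gen, AdjoinRoot.root_X_pow_sub_C_pow]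
  rw [isSGenerator_unitsMap_comp_iff pb.algebraMap_injective, ← AdjoinRoot.powerBasis'_gen]
  exact ((isSGenerator_iff_isDigitBase ι X).1 hX).of_powerBasis pb hgen

/-- If `X` is an `𝕊[μₙ₊]`-generator of `R` and `m > 0`, then the class of `Y`
in `R[Y]/(Y^m - X)` is an `𝕊[μₙ₊]`-generator of `R[Y]/(Y^m - X)`. -/
theorem root_isSGenerator_adjoinRoot {R : Type*} [CommRing R]
    {G : Type*} [CommGroup G] [Fintype G] [IsCyclic G] {n : ℕ}
    (hcard : Fintype.card G = n) (ι : G →* Rˣ) (hι : Function.Injective ι)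
    (X : R) (hX : IsSGenerator ι X) (m : ℕ) (hm : 0 < m) :
    IsSGenerator
      ((Units.map (algebraMap R
          (AdjoinRoot ((Polynomial.X : Polynomial R) ^ m - Polynomial.C X))).toMonoidHom).comp ι)
      (AdjoinRoot.root ((Polynomial.X : Polynomial R) ^ m - Polynomial.C X)) :=
  root_isSGenerator_adjoinRoot_general ι X hX m hm
end

section
/- Let X be an S[μ_n]-generator of a ring R with injective ι : μ_n → R^×. Then any z ∈ R admits a unique decomposition z = a + b where a is represented by a polynomial of degree < m in X with coefficients in ι(μ_n ∪ {0}) and b lies in the ideal generated by X^m. -/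
/-!
Expand `z = Σ f_j X^j` in digits and split the expansion at degree `m`: the low part gives `a`,
the high part is a multiple of `X^m` and gives `b`. Conversely, if `a = Σ_{j<m} f⁰_j X^j` and
`b = c X^m` with `c = Σ g_j X^j`, then concatenating the digits of `a` with those of `c` shifted
by `m` is a digit expansion of `z`, so by uniqueness it is the expansion of `z`, and its low
part is `f⁰`.
-/

open Finsupp

section DigitExpansion

variable {R : Type*} (m : ℕ)

theorem Finsupp.add_embDomain_addRightEmbedding_apply [AddZeroClass R] {f : ℕ →₀ R}
    (hf : ∀ j, m ≤ j → f j = 0) (g : ℕ →₀ R) (j : ℕ) :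
    (f + embDomain (addRightEmbedding m) g) j = if j < m then f j else g (j - m) := by
  split_ifs with hj
  · rw [add_apply, embDomain_of_notMem_range, add_zero]
    rintro ⟨k, rfl⟩
    simp [addRightEmbedding_apply] at hj
  · obtain ⟨k, rfl⟩ := Nat.exists_eq_add_of_le' (Nat.not_lt.1 hj)
    rw [add_apply, hf _ (Nat.not_lt.1 hj), zero_add, Nat.add_sub_cancel,
      ← addRightEmbedding_apply, embDomain_apply_self]

theorem Finsupp.filter_lt_add_embDomain_addRightEmbedding [AddZeroClass R] {f : ℕ →₀ R}
    (hf : ∀ j, m ≤ j → f j = 0) (g : ℕ →₀ R) :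
    (f + embDomain (addRightEmbedding m) g).filter (· < m) = f := by
  ext j
  rw [filter_apply, add_embDomain_addRightEmbedding_apply m hf]
  split_ifs with hj
  · rfl
  · exact (hf j (Nat.not_lt.1 hj)).symm

variable (X : R)

theorem Finsupp.sum_mul_pow_add [Semiring R] (f g : ℕ →₀ R) :
    ((f + g).sum fun j a => a * X ^ j) =
      (f.sum fun j a => a * X ^ j) + g.sum fun j a => a * X ^ j :=
  sum_add_index' (fun _ => zero_mul _) fun _ _ _ => add_mul _ _ _

theorem Finsupp.sum_mul_pow_embDomain_addRightEmbedding [CommSemiring R] (g : ℕ →₀ R) :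
    ((embDomain (addRightEmbedding m) g).sum fun j a => a * X ^ j) =
      (g.sum fun j a => a * X ^ j) * X ^ m := by
  simp only [sum_embDomain, addRightEmbedding_apply, pow_add, sum_mul, mul_assoc]

theorem Finsupp.sum_mul_pow_mem_span_pow [CommSemiring R] {f : ℕ →₀ R}
    (hf : ∀ j ∈ f.support, m ≤ j) : (f.sum fun j a => a * X ^ j) ∈ Ideal.span {X ^ m} :=
  Ideal.mem_span_singleton.2 <| Finset.dvd_sum fun j hj =>
    (pow_dvd_pow X (hf j hj)).mul_left _

end DigitExpansion

theorem sGenerator_unique_decomposition_general {R : Type*} [CommRing R]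
    {G : Type*} [CommGroup G] (ι : G →* Rˣ)
    (X : R) (hX : IsSGenerator ι X) (m : ℕ) (z : R) :
    ∃! p : R × R,
      (∃ f : ℕ →₀ R, (∀ j, f j = 0 ∨ ∃ g : G, f j = (ι g : R)) ∧
        (∀ j, m ≤ j → f j = 0) ∧ (f.sum fun j a => a * X ^ j) = p.1) ∧
      p.2 ∈ Ideal.span {X ^ m} ∧ p.1 + p.2 = z := by
  obtain ⟨f, ⟨hfd, rfl⟩, hfu⟩ := hX z
  have hsplit := sum_mul_pow_add X (f.filter (· < m)) (f.filter fun j => ¬j < m)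
  rw [filter_add_filter_not] at hsplit
  refine ⟨(_, _), ⟨⟨f.filter (· < m), fun j => ?_, fun j hj => ?_, rfl⟩, ?_, hsplit.symm⟩, ?_⟩
  · rw [filter_apply]; split_ifs <;> simp [hfd j]
  · simp [Nat.not_lt.2 hj]
  · exact sum_mul_pow_mem_span_pow m X fun j hj => by
      rw [support_filter, Finset.mem_filter] at hj
      exact Nat.not_lt.1 hj.2
  rintro ⟨a, b⟩ ⟨⟨f₀, hf₀d, hf₀m, rfl⟩, hb, hab⟩
  obtain ⟨c, rfl⟩ := Ideal.mem_span_singleton'.1 hb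
  obtain ⟨g, ⟨hgd, rfl⟩, -⟩ := hX c
  have hexp : f₀ + embDomain (addRightEmbedding m) g = f := by
    refine hfu _ ⟨fun j => ?_, ?_⟩
    · rw [add_embDomain_addRightEmbedding_apply m hf₀m]
      split_ifs
      exacts [hf₀d j, hgd (j - m)]
    · rw [sum_mul_pow_add, sum_mul_pow_embDomain_addRightEmbedding, hab]
  have hlow : f.filter (· < m) = f₀ := by
    rw [← hexp, filter_lt_add_embDomain_addRightEmbedding m hf₀m]
  subst hlow
  exact Prod.ext rfl (add_left_cancel (hab.trans hsplit))

/-- If `X` is an `𝕊[μₙ₊]`-generator of `R`, every `z ∈ R` decomposes uniquely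
as `z = a + b` with `a` represented by a digit polynomial of degree `< m` in `X`
and `b` in the ideal generated by `X^m`. -/
theorem sGenerator_unique_decomposition {R : Type*} [CommRing R]
    {G : Type*} [CommGroup G] [Fintype G] [IsCyclic G] {n : ℕ}
    (hcard : Fintype.card G = n) (ι : G →* Rˣ) (hι : Function.Injective ι)
    (X : R) (hX : IsSGenerator ι X) (m : ℕ) (z : R) :
    ∃! p : R × R,
      (∃ f : ℕ →₀ R, (∀ j, f j = 0 ∨ ∃ g : G, f j = (ι g : R)) ∧
        (∀ j, m ≤ j → f j = 0) ∧ (f.sum fun j a => a * X ^ j) = p.1) ∧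
      p.2 ∈ Ideal.span {X ^ m} ∧ p.1 + p.2 = z :=
  sGenerator_unique_decomposition_general ι X hX m z
end

section
/- Let X be an S[μ_n]-generator of a ring R. Then the canonical ring homomorphism R → lim_m R/(X^m) into the X-adic completion (projective limit of the quotients R/(X^m)) is injective; equivalently, ∩_m (X^m) = 0. -/
namespace Finsupp

theorem forall_embDomain_apply {α β M : Type*} [Zero M] (e : α ↪ β) (f : α →₀ M)
    {P : M → Prop} (h0 : P 0) (hf : ∀ a, P (f a)) (b : β) : P (f.embDomain e b) := by
  by_cases hb : b ∈ Set.range e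
  · obtain ⟨a, rfl⟩ := hb
    rw [embDomain_apply_self]
    exact hf a
  · rw [embDomain_of_notMem_range _ _ _ hb]
    exact h0

theorem embDomain_addRight_apply_of_lt {M : Type*} [Zero M] (f : ℕ →₀ M) {m j : ℕ}
    (hj : j < m) : f.embDomain (addRightEmbedding m) j = 0 :=
  embDomain_of_notMem_range _ _ _ (by rintro ⟨k, rfl⟩; simp at hj)

theorem sum_embDomain_addRight_mul_pow {R : Type*} [Semiring R] (X : R) (m : ℕ)
    (f : ℕ →₀ R) :
    ((f.embDomain (addRightEmbedding m)).sum fun j a => a * X ^ j) =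
      (f.sum fun j a => a * X ^ j) * X ^ m := by
  rw [sum_embDomain, sum_mul]
  refine sum_congr fun k _ => ?_
  rw [addRightEmbedding_apply, pow_add, mul_assoc]

end Finsupp

theorem IsSGenerator.apply_eq_zero_of_mem_span_pow {R : Type*} [CommRing R] {G : Type*} [Group G]
    {ι : G →* Rˣ} {X : R} (hX : IsSGenerator ι X) {z : R} {f : ℕ →₀ R}
    (hf : (∀ j, f j = 0 ∨ ∃ g : G, f j = (ι g : R)) ∧ (f.sum fun j a => a * X ^ j) = z)
    {m : ℕ} (hz : z ∈ Ideal.span {X ^ m}) {j : ℕ} (hj : j < m) : f j = 0 := by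
  obtain ⟨c, rfl⟩ := Ideal.mem_span_singleton'.mp hz
  obtain ⟨g, hg, -⟩ := hX c
  have hshift : g.embDomain (addRightEmbedding m) = f :=
    (hX (c * X ^ m)).unique
      ⟨Finsupp.forall_embDomain_apply _ g (P := fun a => a = 0 ∨ ∃ g : G, a = ι g)
          (Or.inl rfl) hg.1,
        by rw [Finsupp.sum_embDomain_addRight_mul_pow, hg.2]⟩ hf
  rw [← hshift]
  exact Finsupp.embDomain_addRight_apply_of_lt g hj

theorem sGenerator_inter_pow_ideal_eq_bot_general {R : Type*} [CommRing R]
    {G : Type*} [CommGroup G] (ι : G →* Rˣ)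
    (X : R) (hX : IsSGenerator ι X) :
    ∀ z : R, (∀ m : ℕ, z ∈ Ideal.span {X ^ m}) → z = 0 := by
  intro z hz
  obtain ⟨f, hf, -⟩ := hX z
  have hf0 : f = 0 :=
    Finsupp.ext fun j => hX.apply_eq_zero_of_mem_span_pow hf (hz (j + 1)) j.lt_succ_self
  rw [← hf.2, hf0, Finsupp.sum_zero_index]

/-- If `X` is an `𝕊[μₙ₊]`-generator of `R`, then the canonical map to the
`X`-adic completion is injective; equivalently `⋂ₘ (X^m) = 0`. -/
theorem sGenerator_inter_pow_ideal_eq_bot {R : Type*} [CommRing R]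
    {G : Type*} [CommGroup G] [Fintype G] [IsCyclic G] {n : ℕ}
    (hcard : Fintype.card G = n) (ι : G →* Rˣ) (hι : Function.Injective ι)
    (X : R) (hX : IsSGenerator ι X) :
    ∀ z : R, (∀ m : ℕ, z ∈ Ideal.span {X ^ m}) → z = 0 :=
  sGenerator_inter_pow_ideal_eq_bot_general ι X hX
end

section
/- If there exists a ring R with an S[μ_n]-generator X (with injective ι : μ_n → R^×), then n + 1 is a prime power. -/
namespace IsSGenerator

open Polynomial (C eval_add eval_mul eval_C eval_X coeff_X_mul)

variable {R : Type*} [CommRing R] {G : Type*} [Group G] {ι : G →* Rˣ} {X : R}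

def IsDigit (ι : G →* Rˣ) (d : R) : Prop := d = 0 ∨ ∃ g : G, d = (ι g : R)

def digit (ι : G →* Rˣ) : Option G → R
  | none => 0
  | some g => ι g

theorem isDigit_digit (o : Option G) : IsDigit ι (digit ι o) := by
  cases o with
  | none => exact .inl rfl
  | some g => exact .inr ⟨g, rfl⟩

theorem IsDigit.exists_digit_eq {d : R} (hd : IsDigit ι d) : ∃ o, digit ι o = d := by
  rcases hd with rfl | ⟨g, rfl⟩
  exacts [⟨none, rfl⟩, ⟨some g, rfl⟩]

theorem digit_injective [Nontrivial R] (hι : Function.Injective ι) :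
    Function.Injective (digit ι) := by
  rintro (_ | g) (_ | g') h
  · rfl
  · exact absurd h.symm (ι g').ne_zero
  · exact absurd h (ι g).ne_zero
  · exact congrArg some (hι (Units.ext h))

theorem existsUnique_polynomial (hX : IsSGenerator ι X) (z : R) :
    ∃! p : Polynomial R, (∀ j, IsDigit ι (p.coeff j)) ∧ p.eval X = z := by
  have eval_eq (p : Polynomial R) : p.eval X = p.toFinsupp.coeff.sum fun j a => a * X ^ j := by
    rw [Polynomial.eval_eq_sum, Polynomial.sum_def]; rfl
  obtain ⟨f, ⟨hdig, hsum⟩, huniq⟩ := hX z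
  refine ⟨.ofFinsupp (.ofCoeff f), ⟨hdig, (eval_eq _).trans hsum⟩, fun q ⟨hqdig, hq⟩ => ?_⟩
  have hf : q.toFinsupp.coeff = f := huniq _ ⟨hqdig, (eval_eq q).symm.trans hq⟩
  exact Polynomial.ext fun j => DFunLike.congr_fun hf j

theorem exists_isDigit_dvd_sub (hX : IsSGenerator ι X) (z : R) :
    ∃ d, IsDigit ι d ∧ X ∣ z - d := by
  obtain ⟨p, ⟨hdig, rfl⟩, -⟩ := hX.existsUnique_polynomial z
  refine ⟨p.coeff 0, hdig 0, p.divX.eval X, ?_⟩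
  have h := congrArg (Polynomial.eval X) p.X_mul_divX_add
  simp only [eval_add, eval_mul, eval_X, eval_C] at h
  linear_combination -h

/-- If `d - d' = X * q(X)` with `q` a digit polynomial, then `C d` and `C d' + X * q` are two
digit expansions of `d`. -/
theorem eq_of_dvd_sub (hX : IsSGenerator ι X) {d d' : R} (hd : IsDigit ι d)
    (hd' : IsDigit ι d') (h : X ∣ d - d') : d = d' := by
  obtain ⟨c, hc⟩ := h
  obtain ⟨q, ⟨hq, rfl⟩, -⟩ := hX.existsUnique_polynomial c
  obtain ⟨p, -, huniq⟩ := hX.existsUnique_polynomial d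
  have hC : C d = p := by
    refine huniq _ ⟨fun j => ?_, eval_C⟩
    cases j with
    | zero => simpa using hd
    | succ k => exact .inl (by simp)
  have hshift : C d' + Polynomial.X * q = p := by
    refine huniq _ ⟨fun j => ?_, ?_⟩
    · cases j with
      | zero => simpa using hd'
      | succ k => simpa [coeff_X_mul] using hq k
    · simp [← hc]
  simpa using congrArg (Polynomial.coeff · 0) (hC.trans hshift.symm)

theorem bijective_mk_digit [Nontrivial R] (hX : IsSGenerator ι X) (hι : Function.Injective ι) :
    Function.Bijective fun o => Ideal.Quotient.mk (Ideal.span {X}) (digit ι o) := by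
  refine ⟨fun o o' h => digit_injective hι ?_, fun z => ?_⟩
  · rw [Ideal.Quotient.eq, Ideal.mem_span_singleton] at h
    exact hX.eq_of_dvd_sub (isDigit_digit o) (isDigit_digit o') h
  · obtain ⟨z, rfl⟩ := Ideal.Quotient.mk_surjective z
    obtain ⟨d, hd, hzd⟩ := hX.exists_isDigit_dvd_sub z
    obtain ⟨o, rfl⟩ := hd.exists_digit_eq
    exact ⟨o, Ideal.Quotient.eq.mpr (Ideal.mem_span_singleton.mpr (dvd_sub_comm.mp hzd))⟩

theorem isField_quotient [Nontrivial R] (hX : IsSGenerator ι X) :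
    IsField (R ⧸ Ideal.span {X}) where
  exists_pair_ne := by
    refine ⟨1, 0, fun h => one_ne_zero (α := R) ?_⟩
    rw [← map_one (Ideal.Quotient.mk _), ← map_zero (Ideal.Quotient.mk _), Ideal.Quotient.eq,
      Ideal.mem_span_singleton] at h
    simpa using hX.eq_of_dvd_sub (.inr ⟨1, rfl⟩) (.inl rfl) (by simpa using h)
  mul_comm := mul_comm
  mul_inv_cancel {a} ha := by
    obtain ⟨z, rfl⟩ := Ideal.Quotient.mk_surjective a
    obtain ⟨d, hd, hzd⟩ := hX.exists_isDigit_dvd_sub z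
    have hz : Ideal.Quotient.mk (Ideal.span {X}) z = Ideal.Quotient.mk _ d :=
      Ideal.Quotient.eq.mpr (Ideal.mem_span_singleton.mpr hzd)
    rcases hd with rfl | ⟨g, rfl⟩
    · exact absurd (hz.trans (map_zero _)) ha
    · rw [hz]; exact ((ι g).isUnit.map _).exists_right_inv

end IsSGenerator

theorem sGenerator_card_add_one_isPrimePow_general {R : Type*} [CommRing R]
    {G : Type*} [CommGroup G] [Fintype G] {n : ℕ}
    (hcard : Fintype.card G = n) (ι : G →* Rˣ) (hι : Function.Injective ι)
    (X : R) (hX : IsSGenerator ι X) :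
    IsPrimePow (n + 1) := by
  rcases subsingleton_or_nontrivial R with _ | _
  · have : Subsingleton G := hι.subsingleton
    have : n = 1 := le_antisymm (hcard ▸ Fintype.card_le_one_iff_subsingleton.mpr this)
      (hcard ▸ Fintype.card_pos)
    subst this
    exact Nat.prime_two.isPrimePow
  · let := hX.isField_quotient.toField
    have hbij := hX.bijective_mk_digit hι
    let := Fintype.ofBijective _ hbij
    rw [← hcard, ← Fintype.card_option, Fintype.card_of_bijective hbij]
    exact Fintype.isPrimePow_card_of_field

/-- If some ring `R` admits an `𝕊[μₙ₊]`-generator (with `μₙ` of order `n`),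
then `n + 1` is a prime power. -/
theorem sGenerator_card_add_one_isPrimePow {R : Type*} [CommRing R]
    {G : Type*} [CommGroup G] [Fintype G] [IsCyclic G] {n : ℕ}
    (hcard : Fintype.card G = n) (ι : G →* Rˣ) (hι : Function.Injective ι)
    (X : R) (hX : IsSGenerator ι X) :
    IsPrimePow (n + 1) :=
  sGenerator_card_add_one_isPrimePow_general hcard ι hι X hX
end

section
/- For the ring ℤ with carry rule 1 + 1 = −1 + X + X², the integer 5 cannot be written as a finite sum Σ_j α_j X^j with all α_j ∈ {−1,0,1}: in the quotient ring ℤ[X]/(X^n, X² + X − 3) the element 5 is represented by −1 − X − X³ − X⁴ − ⋯ − X^{n−1}, a representation of degree n−1 for every n. -/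
/-!
Reducing modulo `X² + X - 3` turns a representation `p ≡ 5` in `R_n` into an identity
`p - 5 ≡ (X² + X - 3) · v (mod X^n)`, whose cofactor `v` records the carries. Comparing
coefficients, a `{-1,0,1}`-digit `p` forces the carries `2, 1, 1, 1, …` and with them the digits
`-1, -1, 0, -1, -1, …` below degree `n`; so no finitely supported digit sequence works for every
`n`. Conversely, since `(X - 1)(X + 2) ≡ 1`, the geometric sum `1 + X + ⋯ + X^{n-1}` is
congruent to `-(X + 2)`, which yields the stated representation.
-/

open Polynomial

/-- The truncated rings `R_n = ℤ[X]/(X^n, X² + X - 3)` for the carry rule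
`1 + 1 = -1 + X + X²`. -/
noncomputable def carryQuot (n : ℕ) : Ideal (Polynomial ℤ) :=
  Ideal.span {(X : Polynomial ℤ) ^ n, X ^ 2 + X - 3}

section CoeffMul

variable {R : Type*} [Ring R] (v : R[X])

lemma coeff_X_sq_add_X_sub_three_mul_zero :
    ((X ^ 2 + X - 3) * v).coeff 0 = -3 * v.coeff 0 := by
  simp [sub_mul, add_mul, coeff_ofNat_mul]

lemma coeff_X_sq_add_X_sub_three_mul_one :
    ((X ^ 2 + X - 3) * v).coeff 1 = v.coeff 0 - 3 * v.coeff 1 := by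
  simp [sub_mul, add_mul, coeff_ofNat_mul, coeff_X_pow_mul']

lemma coeff_X_sq_add_X_sub_three_mul_add_two (k : ℕ) :
    ((X ^ 2 + X - 3) * v).coeff (k + 2) = v.coeff k + v.coeff (k + 1) - 3 * v.coeff (k + 2) := by
  simp [sub_mul, add_mul, coeff_ofNat_mul, coeff_X_pow_mul]

end CoeffMul

lemma carryQuot_antitone : Antitone carryQuot := by
  intro m n hmn
  refine Ideal.span_le.2 (Set.insert_subset_iff.2 ⟨?_, Set.singleton_subset_iff.2 ?_⟩)
  · rw [← pow_sub_mul_pow X hmn]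
    exact Ideal.mul_mem_left _ _ (Ideal.subset_span (by simp))
  · exact Ideal.subset_span (by simp)

lemma mk_carryQuot_eq_five_iff {n : ℕ} {p : ℤ[X]} :
    Ideal.Quotient.mk (carryQuot n) p = 5 ↔ p - 5 ∈ carryQuot n := by
  rw [← map_ofNat (Ideal.Quotient.mk _) 5, Ideal.Quotient.eq]

lemma sub_five_mem_carryQuot_add_three (m : ℕ) :
    (-1 - X - ∑ j ∈ Finset.Icc 3 (m + 2), X ^ j) - 5 ∈ carryQuot (m + 3) := by
  have hsum : ∑ j ∈ Finset.Icc 3 (m + 2), (X : ℤ[X]) ^ j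
      = ∑ j ∈ Finset.range (m + 3), X ^ j - (1 + X + X ^ 2) := by
    rw [← Finset.Ico_add_one_right_eq_Icc,
      ← Finset.sum_range_add_sum_Ico _ (by omega : 3 ≤ m + 2 + 1)]
    simp [Finset.sum_range_succ]
  refine Ideal.mem_span_pair.2 ⟨-(X + 2), 1 + ∑ j ∈ Finset.range (m + 3), X ^ j, ?_⟩
  rw [hsum]
  linear_combination (X + 2) * geom_sum_mul (X : ℤ[X]) (m + 3)

lemma sub_five_mem_carryQuot (n : ℕ) :
    (-1 - X - ∑ j ∈ Finset.Icc 3 (n - 1), X ^ j) - 5 ∈ carryQuot n := by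
  rcases lt_or_ge n 3 with hn | hn
  · have hempty : Finset.Icc 3 (n - 1) = Finset.Icc 3 (0 + 2) := by
      rw [Finset.Icc_eq_empty (by omega), Finset.Icc_eq_empty (by omega)]
    rw [hempty]
    exact carryQuot_antitone (by omega) (sub_five_mem_carryQuot_add_three 0)
  · obtain ⟨m, rfl⟩ := Nat.exists_eq_add_of_le' hn
    exact sub_five_mem_carryQuot_add_three m

lemma exists_coeff_eq_coeff_X_sq_add_X_sub_three_mul_of_mem_carryQuot {p : ℤ[X]} {n : ℕ}
    (hp : p ∈ carryQuot n) :
    ∃ v : ℤ[X], ∀ k < n, p.coeff k = ((X ^ 2 + X - 3) * v).coeff k := by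
  obtain ⟨u, v, rfl⟩ := Ideal.mem_span_pair.1 hp
  refine ⟨v, fun k hk => ?_⟩
  rw [coeff_add, coeff_mul_X_pow', if_neg (by omega), zero_add, mul_comm]

lemma coeff_add_three_eq_neg_one_of_sub_five_mem_carryQuot {p : ℤ[X]} {n k : ℕ}
    (hdig : ∀ j, p.coeff j = -1 ∨ p.coeff j = 0 ∨ p.coeff j = 1)
    (hp : p - 5 ∈ carryQuot n) (hk : k + 3 < n) : p.coeff (k + 3) = -1 := by
  obtain ⟨v, hv⟩ := exists_coeff_eq_coeff_X_sq_add_X_sub_three_mul_of_mem_carryQuot hp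
  have hdigit : ∀ j, j + 2 < n →
      p.coeff (j + 2) = v.coeff j + v.coeff (j + 1) - 3 * v.coeff (j + 2) :=
    fun j hj => by simpa [coeff_X_sq_add_X_sub_three_mul_add_two] using hv (j + 2) hj
  have carries : ∀ j, j + 2 < n → v.coeff (j + 1) = 1 ∧ v.coeff (j + 2) = 1 := by
    intro j
    induction j with
    | zero =>
      intro hn
      show v.coeff 1 = 1 ∧ v.coeff 2 = 1
      have h0 := hv 0 (by omega)
      have h1 := hv 1 (by omega)
      have h2 : p.coeff 2 = v.coeff 0 + v.coeff 1 - 3 * v.coeff 2 := hdigit 0 hn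
      simp only [coeff_sub, coeff_ofNat_zero, coeff_ofNat_succ, coeff_X_sq_add_X_sub_three_mul_zero,
        coeff_X_sq_add_X_sub_three_mul_one] at h0 h1
      have hv0 : v.coeff 0 = 2 := by rcases hdig 0 with _ | _ | _ <;> omega
      have hv1 : v.coeff 1 = 1 := by rcases hdig 1 with _ | _ | _ <;> omega
      exact ⟨hv1, by rcases hdig 2 with _ | _ | _ <;> omega⟩
    | succ j ih =>
      intro hn
      show v.coeff (j + 2) = 1 ∧ v.coeff (j + 3) = 1
      have h : p.coeff (j + 3) = v.coeff (j + 1) + v.coeff (j + 2) - 3 * v.coeff (j + 3) :=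
        hdigit (j + 1) hn
      have := ih (by omega)
      rcases hdig (j + 3) with _ | _ | _ <;> omega
  have h : p.coeff (k + 3) = v.coeff (k + 1) + v.coeff (k + 2) - 3 * v.coeff (k + 3) :=
    hdigit (k + 1) hk
  have := carries k (by omega)
  rcases hdig (k + 3) with _ | _ | _ <;> omega

lemma coeff_finsuppSum_C_mul_X_pow {R : Type*} [Semiring R] (α : ℕ →₀ R) (k : ℕ) :
    (α.sum fun j a => C a * X ^ j).coeff k = α k := by
  simp [Finsupp.sum]

/-- With the carry rule `1 + 1 = -1 + X + X²`, in every truncation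
`ℤ[X]/(X^n, X² + X - 3)` the element `5` is represented by
`-1 - X - X³ - X⁴ - ⋯ - X^{n-1}` (of degree `n-1`), and consequently `5`
admits no finitely supported `{-1,0,1}`-digit representation compatible with
all truncations. -/
theorem five_not_representable_carry_rule :
    (∀ n : ℕ, (Ideal.Quotient.mk (carryQuot n))
        (-1 - X - ∑ j ∈ Finset.Icc 3 (n - 1), X ^ j) = 5) ∧
    ¬ ∃ α : ℕ →₀ ℤ, (∀ j, α j = -1 ∨ α j = 0 ∨ α j = 1) ∧
      ∀ n : ℕ, (Ideal.Quotient.mk (carryQuot n))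
        (α.sum fun j a => C a * X ^ j) = 5 := by
  refine ⟨fun n => mk_carryQuot_eq_five_iff.2 (sub_five_mem_carryQuot n), ?_⟩
  rintro ⟨α, hdig, hrep⟩
  set N := α.support.sup id
  have hN : α (N + 3) = 0 := Finsupp.notMem_support_iff.1 fun h => by
    have : N + 3 ≤ N := Finset.le_sup (f := id) h
    omega
  have hcoeff := coeff_finsuppSum_C_mul_X_pow α
  have := coeff_add_three_eq_neg_one_of_sub_five_mem_carryQuot (n := N + 4) (k := N)
    (fun j => hcoeff j ▸ hdig j) (mk_carryQuot_eq_five_iff.1 (hrep (N + 4))) (by omega)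
  rw [hcoeff, hN] at this
  norm_num at this
end

section
/- Every Gaussian integer z ∈ ℤ[i] can be written uniquely as a finite sum z = Σ_j α_j·(−1+i)^j with digits α_j ∈ {0,1}. -/
/-!
Write `β = -1 + i`. Since `ℤ[i] / (β) ≅ 𝔽₂`, every `z` is `d + β w` for a unique digit
`d ∈ {0, 1}`, and `β` is not a zero divisor, so digits can be peeled off one at a time: this gives
uniqueness. For existence, iterate `z ↦ w`. Both branches `z ↦ (z - d) / β` contract distances by
`1/√2`, around their fixed points `0` and `(2 + i) / 5`; measured from the point `(2 + i) / 9`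
between them, the distance to `w` is smaller than that to `z` for every `z ≠ 0`, so the iteration
reaches `0`.
-/

open Polynomial

namespace Polynomial

variable {R : Type*} [CommRing R]

theorem aeval_eq_coeff_zero_add_mul_aeval_divX (b : R) (p : ℤ[X]) :
    aeval b p = p.coeff 0 + b * aeval b p.divX := by
  conv_lhs => rw [← X_mul_divX_add p]
  simp [add_comm]

theorem aeval_ofFinsupp_ofCoeff (b : R) (α : ℕ →₀ ℤ) :
    aeval b (ofFinsupp (AddMonoidAlgebra.ofCoeff α)) = α.sum fun j a => (a : R) * b ^ j := by
  rw [aeval_def, eval₂_eq_sum, sum_def, support_ofFinsupp, coeff_ofFinsupp]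
  simp [Finsupp.sum]

theorem existsUnique_finsupp_iff_existsUnique_polynomial (b : R) (D : Set ℤ) (z : R) :
    (∃! α : ℕ →₀ ℤ, (∀ j, α j ∈ D) ∧ (α.sum fun j a => (a : R) * b ^ j) = z) ↔
      ∃! p : ℤ[X], (∀ n, p.coeff n ∈ D) ∧ aeval b p = z := by
  let e : (ℕ →₀ ℤ) ≃ ℤ[X] := AddMonoidAlgebra.coeffEquiv.symm.trans (toFinsuppIso ℤ).symm.toEquiv
  rw [← e.existsUnique_congr_right]
  exact existsUnique_congr fun α => by
    rw [← aeval_ofFinsupp_ofCoeff]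
    rfl

theorem exists_aeval_eq_of_descent (b : R) {D : Set ℤ} (hD : 0 ∈ D) (f : R → ℕ)
    (hstep : ∀ z ≠ 0, ∃ d ∈ D, ∃ w, z = d + b * w ∧ f w < f z) (z : R) :
    ∃ p : ℤ[X], (∀ n, p.coeff n ∈ D) ∧ aeval b p = z := by
  induction z using (measure f).wf.induction with
  | _ z ih =>
  rcases eq_or_ne z 0 with rfl | hz
  · exact ⟨0, fun _ => hD, map_zero _⟩
  obtain ⟨d, hd, w, rfl, hw⟩ := hstep z hz
  obtain ⟨p, hp, rfl⟩ := ih w hw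
  refine ⟨C d + X * p, fun n => ?_, by simp⟩
  cases n with
  | zero => simpa using hd
  | succ n => rw [coeff_add, coeff_C_succ, coeff_X_mul, zero_add]; exact hp n

variable [IsDomain R] {b : R} {D : Set ℤ}

theorem coeff_zero_eq_and_aeval_divX_eq (hb : b ≠ 0)
    (hD : ∀ d ∈ D, ∀ d' ∈ D, b ∣ ((d - d' : ℤ) : R) → d = d') {p q : ℤ[X]}
    (hp : p.coeff 0 ∈ D) (hq : q.coeff 0 ∈ D) (h : aeval b p = aeval b q) :
    p.coeff 0 = q.coeff 0 ∧ aeval b p.divX = aeval b q.divX := by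
  rw [aeval_eq_coeff_zero_add_mul_aeval_divX b p,
    aeval_eq_coeff_zero_add_mul_aeval_divX b q] at h
  have h0 : p.coeff 0 = q.coeff 0 :=
    hD _ hp _ hq ⟨aeval b q.divX - aeval b p.divX, by push_cast; linear_combination h⟩
  rw [h0, add_right_inj] at h
  exact ⟨h0, mul_left_cancel₀ hb h⟩

theorem eq_of_aeval_eq_of_coeff_mem (hb : b ≠ 0)
    (hD : ∀ d ∈ D, ∀ d' ∈ D, b ∣ ((d - d' : ℤ) : R) → d = d') {p q : ℤ[X]}
    (hp : ∀ n, p.coeff n ∈ D) (hq : ∀ n, q.coeff n ∈ D) (h : aeval b p = aeval b q) :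
    p = q := by
  ext n
  induction n generalizing p q with
  | zero => exact (coeff_zero_eq_and_aeval_divX_eq hb hD (hp 0) (hq 0) h).1
  | succ n ih =>
    rw [← coeff_divX, ← coeff_divX]
    exact ih (fun n => coeff_divX (p := p) ▸ hp _) (fun n => coeff_divX (p := q) ▸ hq _)
      (coeff_zero_eq_and_aeval_divX_eq hb hD (hp 0) (hq 0) h).2

end Polynomial

local notation "β" => (-1 + Zsqrtd.sqrtd : GaussianInt)

namespace GaussianInt

theorem exists_digit_add_mul (z : GaussianInt) :
    ∃ d : ℤ, (d = 0 ∨ d = 1) ∧ ∃ w, z = d + β * w :=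
  ⟨(z.re + z.im) % 2, by omega,
    ⟨(z.re + z.im) / 2 - z.re + (z.re + z.im) % 2, -((z.re + z.im) / 2)⟩,
    by ext <;> simp <;> omega⟩

theorem norm_nine_mul_sub_lt {d : ℤ} (hd : d = 0 ∨ d = 1) {w : GaussianInt}
    (hz : (d : GaussianInt) + β * w ≠ 0) :
    (9 * w - ⟨2, 1⟩).norm < (9 * ((d : GaussianInt) + β * w) - ⟨2, 1⟩).norm := by
  obtain ⟨x, y⟩ := w
  suffices (9 * x - 2) ^ 2 + (9 * y - 1) ^ 2 < (9 * (d - x - y) - 2) ^ 2 + (9 * (x - y) - 1) ^ 2 by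
    convert this using 1 <;> simp [Zsqrtd.norm_def] <;> ring
  rcases hd with rfl | rfl
  · have hxy : 0 < x ^ 2 + y ^ 2 := by
      by_contra! h
      obtain ⟨rfl, rfl⟩ : x = 0 ∧ y = 0 := ⟨by nlinarith, by nlinarith⟩
      exact hz (by ext <;> simp)
    have hx : 0 ≤ x * (x + 1) := by rcases le_or_gt 0 x with h | h <;> nlinarith
    have hy : 0 ≤ y * (y + 1) := by rcases le_or_gt 0 y with h | h <;> nlinarith
    nlinarith
  · have hx : 0 ≤ (x - 1) * (3 * x - 1) := by rcases le_or_gt x 0 with h | h <;> nlinarith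
    have hy : 0 ≤ (y - 1) * (9 * y - 1) := by rcases le_or_gt y 0 with h | h <;> nlinarith
    nlinarith

theorem not_isUnit_neg_one_add_sqrtd : ¬IsUnit β := by
  rw [← Zsqrtd.norm_eq_one_iff]
  decide

theorem digit_eq_of_dvd_sub {d d' : ℤ} (hd : d ∈ ({0, 1} : Set ℤ)) (hd' : d' ∈ ({0, 1} : Set ℤ))
    (h : β ∣ ((d - d' : ℤ) : GaussianInt)) : d = d' := by
  rcases hd with rfl | rfl <;> rcases hd' with rfl | rfl
  · rfl
  · exact absurd (isUnit_of_dvd_one (dvd_neg.mp (by simpa using h))) not_isUnit_neg_one_add_sqrtd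
  · exact absurd (isUnit_of_dvd_one (by simpa using h)) not_isUnit_neg_one_add_sqrtd
  · rfl

theorem existsUnique_aeval_neg_one_add_sqrtd_eq (z : GaussianInt) :
    ∃! p : ℤ[X], (∀ n, p.coeff n ∈ ({0, 1} : Set ℤ)) ∧ aeval β p = z := by
  have hβ : β ≠ 0 := fun h => by simpa using congrArg Zsqrtd.im h
  have hstep (z : GaussianInt) (hz : z ≠ 0) : ∃ d ∈ ({0, 1} : Set ℤ), ∃ w, z = d + β * w ∧
      (9 * w - ⟨2, 1⟩).norm.natAbs < (9 * z - ⟨2, 1⟩).norm.natAbs := by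
    obtain ⟨d, hd, w, rfl⟩ := exists_digit_add_mul z
    exact ⟨d, hd, w, rfl,
      Int.natAbs_lt_natAbs_of_nonneg_of_lt (norm_nonneg _) (norm_nine_mul_sub_lt hd hz)⟩
  obtain ⟨p, hp, rfl⟩ := exists_aeval_eq_of_descent β (Or.inl rfl) _ hstep z
  exact ⟨p, ⟨hp, rfl⟩, fun q hq => eq_of_aeval_eq_of_coeff_mem hβ
    (fun d hd d' hd' => digit_eq_of_dvd_sub hd hd') hq.1 hp hq.2⟩

end GaussianInt

/-- Every Gaussian integer is uniquely a finite sum `Σ_j α_j (-1+i)^j`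
with digits `α_j ∈ {0,1}`. -/
theorem gaussianInt_unique_representation (z : GaussianInt) :
    ∃! α : ℕ →₀ ℤ, (∀ j, α j = 0 ∨ α j = 1) ∧
      (α.sum fun j a => (a : GaussianInt) * (-1 + Zsqrtd.sqrtd) ^ j) = z :=
  (existsUnique_finsupp_iff_existsUnique_polynomial _ {0, 1} z).2
    (GaussianInt.existsUnique_aeval_neg_one_add_sqrtd_eq z)
end

section
/- For X = −1+i in ℤ[i] and k ≥ 1, the quotient ℤ[i]/(X^{2k}) is isomorphic as a ring to (ℤ/2^kℤ)[X]/(X² + 2X + 2), and ℤ[i]/(X^{2k+1}) has additive group ℤ/2^{k+1}ℤ ⊕ (ℤ/2^kℤ)·X. -/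
/-! With `ω = -1 + i` we have `ℤ[i] = ℤ[ω]`, `ω² + 2ω + 2 = 0` and `ω² = -2i`, so `ω^(2k)` is
associated to `2^k` and `ω^(2k+1)` to `2^k ω`. Reducing mod `n` gives
`ℤ[i]/(n) ≅ (ℤ/n)[X]/(X² + 2X + 2)` via `ω ↦ X`. In the basis `1, ω` the ideal `(nω)` is
`2nℤ ⊕ nℤω`, because `nω · ω = -2n - 2nω`; hence `ℤ[i]/(nω) ≅ ℤ/2n ⊕ ℤ/n` additively. -/

open Polynomial

local notation "ℤ[i]" => GaussianInt

theorem AdjoinRoot.root_sq_add_two_mul_add_two {R : Type*} [CommRing R] :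
    root (X ^ 2 + 2 * X + 2 : R[X]) ^ 2 + 2 * root (X ^ 2 + 2 * X + 2 : R[X]) + 2 = 0 := by
  have h := AdjoinRoot.eval₂_root (X ^ 2 + 2 * X + 2 : R[X])
  simp only [eval₂_add, eval₂_X_pow, eval₂_mul, eval₂_ofNat, eval₂_X] at h
  exact h

namespace GaussianInt

def ω : ℤ[i] := -1 + Zsqrtd.sqrtd

theorem ω_sq : ω ^ 2 = 2 * -Zsqrtd.sqrtd := by
  ext <;> simp [ω, sq]

theorem ω_sq_add_two_mul_add_two : ω ^ 2 + 2 * ω + 2 = 0 := by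
  ext <;> simp [ω, sq]

theorem isUnit_neg_sqrtd : IsUnit (-Zsqrtd.sqrtd : ℤ[i]) :=
  IsUnit.of_mul_eq_one Zsqrtd.sqrtd (by ext <;> simp)

theorem associated_two_pow_ω_pow_two_mul (k : ℕ) : Associated ((2 : ℤ[i]) ^ k) (ω ^ (2 * k)) := by
  rw [pow_mul, ω_sq, mul_pow]
  exact associated_mul_unit_right _ _ (isUnit_neg_sqrtd.pow k)

theorem span_ω_pow_two_mul (k : ℕ) :
    Ideal.span {ω ^ (2 * k)} = Ideal.span {((2 ^ k : ℕ) : ℤ[i])} := by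
  rw [Ideal.span_singleton_eq_span_singleton, Nat.cast_pow, Nat.cast_ofNat]
  exact (associated_two_pow_ω_pow_two_mul k).symm

theorem span_ω_pow_two_mul_add_one (k : ℕ) :
    Ideal.span {ω ^ (2 * k + 1)} = Ideal.span {((2 ^ k : ℕ) : ℤ[i]) * ω} := by
  rw [Ideal.span_singleton_eq_span_singleton, Nat.cast_pow, Nat.cast_ofNat, pow_succ]
  exact (associated_two_pow_ω_pow_two_mul k).symm.mul_right ω

instance charP_quotient_span_natCast (n : ℕ) : CharP (ℤ[i] ⧸ Ideal.span {(n : ℤ[i])}) n where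
  cast_eq_zero_iff m := by
    rw [← map_natCast (Ideal.Quotient.mk _), Ideal.Quotient.eq_zero_iff_dvd,
      ← Int.cast_natCast, ← Int.cast_natCast (R := ℤ[i]) m, Zsqrtd.intCast_dvd_intCast,
      Int.natCast_dvd_natCast]

section LiftOfRoot

variable {S : Type*} [CommRing S] (r : S) (hr : r ^ 2 + 2 * r + 2 = 0)

def liftOfRoot : ℤ[i] →+* S :=
  Zsqrtd.lift ⟨r + 1, by push_cast; linear_combination hr⟩

theorem liftOfRoot_sqrtd : liftOfRoot r hr Zsqrtd.sqrtd = r + 1 := by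
  simp [liftOfRoot]

theorem liftOfRoot_ω : liftOfRoot r hr ω = r := by
  simp [ω, liftOfRoot_sqrtd]

end LiftOfRoot

noncomputable section QuotientNatCast

variable (n : ℕ)

def quotientSpanNatCastToAdjoinRoot :
    ℤ[i] ⧸ Ideal.span {(n : ℤ[i])} →+* AdjoinRoot (X ^ 2 + 2 * X + 2 : (ZMod n)[X]) :=
  Ideal.Quotient.lift _ (liftOfRoot _ AdjoinRoot.root_sq_add_two_mul_add_two) fun a ha => by
    obtain ⟨c, rfl⟩ := Ideal.mem_span_singleton'.mp ha
    rw [map_mul, map_natCast, ← map_natCast (AdjoinRoot.of _), ZMod.natCast_self, map_zero,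
      mul_zero]

def adjoinRootToQuotientSpanNatCast :
    AdjoinRoot (X ^ 2 + 2 * X + 2 : (ZMod n)[X]) →+* ℤ[i] ⧸ Ideal.span {(n : ℤ[i])} :=
  AdjoinRoot.lift (ZMod.castHom dvd_rfl _) (Ideal.Quotient.mk _ ω) (by
    simpa only [eval₂_add, eval₂_mul, eval₂_pow, eval₂_X, eval₂_ofNat, map_add, map_mul, map_pow,
      map_ofNat, map_zero] using
      congrArg (Ideal.Quotient.mk (Ideal.span {(n : ℤ[i])})) ω_sq_add_two_mul_add_two)

def quotientSpanNatCastEquivAdjoinRoot :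
    ℤ[i] ⧸ Ideal.span {(n : ℤ[i])} ≃+* AdjoinRoot (X ^ 2 + 2 * X + 2 : (ZMod n)[X]) :=
  RingEquiv.ofRingHom (quotientSpanNatCastToAdjoinRoot n) (adjoinRootToQuotientSpanNatCast n)
    (AdjoinRoot.ringHom_ext (RingHom.ext_zmod _ _) (by
      simp [adjoinRootToQuotientSpanNatCast, quotientSpanNatCastToAdjoinRoot, liftOfRoot_ω]))
    (Ideal.Quotient.ringHom_ext (Zsqrtd.hom_ext _ _ (by
      simp [adjoinRootToQuotientSpanNatCast, quotientSpanNatCastToAdjoinRoot, liftOfRoot_sqrtd, ω])))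

end QuotientNatCast

noncomputable section QuotientNatCastMulω

variable (n : ℕ)

theorem natCast_mul_ω_mul (z : ℤ[i]) :
    (n : ℤ[i]) * ω * z = ⟨n * (-z.re - z.im), n * (z.re - z.im)⟩ := by
  ext <;>
    simp only [ω, Zsqrtd.re_mul, Zsqrtd.im_mul, Zsqrtd.re_natCast, Zsqrtd.im_natCast,
      Zsqrtd.re_add, Zsqrtd.im_add, Zsqrtd.re_neg, Zsqrtd.im_neg, Zsqrtd.re_one, Zsqrtd.im_one,
      Zsqrtd.re_sqrtd, Zsqrtd.im_sqrtd] <;>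
    ring

theorem natCast_mul_ω_dvd_iff (z : ℤ[i]) :
    (n : ℤ[i]) * ω ∣ z ↔ (2 * n : ℤ) ∣ z.re + z.im ∧ (n : ℤ) ∣ z.im := by
  constructor
  · rintro ⟨c, rfl⟩
    rw [natCast_mul_ω_mul]
    exact ⟨⟨-c.im, by ring⟩, ⟨c.re - c.im, rfl⟩⟩
  · rintro ⟨⟨m, hm⟩, ⟨t, ht⟩⟩
    refine ⟨⟨t - m, -m⟩, ?_⟩
    rw [natCast_mul_ω_mul]
    ext <;> dsimp only <;> linarith

/-- `z = (z.re + z.im) + z.im * ω`: the coordinates of `z` in the basis `1, ω`. -/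
def toZModProd : ℤ[i] →+ ZMod (2 * n) × ZMod n where
  toFun z := (((z.re + z.im : ℤ) : ZMod (2 * n)), ((z.im : ℤ) : ZMod n))
  map_zero' := by simp
  map_add' a b := by
    simp only [Zsqrtd.re_add, Zsqrtd.im_add, Int.cast_add, Prod.mk_add_mk]
    abel_nf

theorem toZModProd_surjective : Function.Surjective (toZModProd n) := by
  rintro ⟨a, b⟩
  obtain ⟨a, rfl⟩ := ZMod.intCast_surjective a
  obtain ⟨b, rfl⟩ := ZMod.intCast_surjective b
  exact ⟨⟨a - b, b⟩, by simp [toZModProd]⟩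

theorem ker_toZModProd :
    LinearMap.ker (toZModProd n).toIntLinearMap =
      (Ideal.span {(n : ℤ[i]) * ω}).restrictScalars ℤ := by
  ext z
  rw [LinearMap.mem_ker, Submodule.restrictScalars_mem, Ideal.mem_span_singleton,
    natCast_mul_ω_dvd_iff, AddMonoidHom.coe_toIntLinearMap]
  simp only [toZModProd, AddMonoidHom.coe_mk, ZeroHom.coe_mk, Prod.mk_eq_zero,
    ZMod.intCast_zmod_eq_zero_iff_dvd, Nat.cast_mul, Nat.cast_ofNat]

def quotientSpanNatCastMulωAddEquiv :
    ℤ[i] ⧸ Ideal.span {(n : ℤ[i]) * ω} ≃+ ZMod (2 * n) × ZMod n :=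
  ((Submodule.Quotient.restrictScalarsEquiv ℤ _).symm.trans
    ((Submodule.quotEquivOfEq _ _ (ker_toZModProd n).symm).trans
      (LinearMap.quotKerEquivOfSurjective _ (toZModProd_surjective n)))).toAddEquiv

end QuotientNatCastMulω

end GaussianInt

theorem gaussianInt_quotient_structure_general (k : ℕ) :
    Nonempty ((GaussianInt ⧸ Ideal.span {((-1 + Zsqrtd.sqrtd) ^ (2 * k) : GaussianInt)}) ≃+*
        AdjoinRoot ((X : Polynomial (ZMod (2 ^ k))) ^ 2 + 2 * X + 2)) ∧
    Nonempty ((GaussianInt ⧸ Ideal.span {((-1 + Zsqrtd.sqrtd) ^ (2 * k + 1) : GaussianInt)}) ≃+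
        (ZMod (2 ^ (k + 1)) × ZMod (2 ^ k))) := by
  refine ⟨⟨?_⟩, ⟨?_⟩⟩
  · exact (Ideal.quotEquivOfEq (GaussianInt.span_ω_pow_two_mul k)).trans
      (GaussianInt.quotientSpanNatCastEquivAdjoinRoot (2 ^ k))
  · exact (Ideal.quotEquivOfEq (GaussianInt.span_ω_pow_two_mul_add_one k)).toAddEquiv.trans
      ((GaussianInt.quotientSpanNatCastMulωAddEquiv (2 ^ k)).trans
        ((ZMod.ringEquivCongr (pow_succ' 2 k).symm).toAddEquiv.prodCongr (AddEquiv.refl _)))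

/-- For `X = -1+i` in `ℤ[i]` and `k ≥ 1`: `ℤ[i]/(X^{2k})` is ring-isomorphic to
`(ℤ/2^kℤ)[X]/(X² + 2X + 2)`, and `ℤ[i]/(X^{2k+1})` is, as an additive group,
`ℤ/2^{k+1}ℤ ⊕ ℤ/2^kℤ`. -/
theorem gaussianInt_quotient_structure (k : ℕ) (hk : 1 ≤ k) :
    Nonempty ((GaussianInt ⧸ Ideal.span {((-1 + Zsqrtd.sqrtd) ^ (2 * k) : GaussianInt)}) ≃+*
        AdjoinRoot ((X : Polynomial (ZMod (2 ^ k))) ^ 2 + 2 * X + 2)) ∧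
    Nonempty ((GaussianInt ⧸ Ideal.span {((-1 + Zsqrtd.sqrtd) ^ (2 * k + 1) : GaussianInt)}) ≃+
        (ZMod (2 ^ (k + 1)) × ZMod (2 ^ k))) :=
  gaussianInt_quotient_structure_general k
end

section
/- There is no polynomial P(X) = −1 + Σ_{j=1}^{n−1} a_j X^j + ε X^n with a_j ∈ {−1,0,1} and ε = ±1 such that X² + 3X + 3 divides P(X) − 2 in ℤ[X]. -/
/-!
Write `(X² + 3X + 3) Q = P - 2` and `b_k` for the coefficients of `Q`. Comparing coefficients gives
`c_k = b_{k-2} + 3 b_{k-1} + 3 b_k` for the coefficients `c_k` of `P - 2`. From `c_0 = -3` and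
`|c_k| ≤ 1` for `0 < k < n`, reducing modulo 3 forces `b_k = (-1)^(k+1)` for all `k < n`.
At degree `n + 1` the coefficient of `P - 2` vanishes, so `b_{n-1} = ±1` would be divisible by 3.
-/

open Polynomial

section Quadratic

variable {R : Type*} [Semiring R] (Q : R[X])

theorem coeff_X_sq_add_three_mul_X_add_three_mul_zero :
    ((X ^ 2 + 3 * X + 3) * Q).coeff 0 = 3 * Q.coeff 0 := by
  simp [add_mul, mul_assoc, coeff_ofNat_mul]

theorem coeff_X_sq_add_three_mul_X_add_three_mul_one :
    ((X ^ 2 + 3 * X + 3) * Q).coeff 1 = 3 * Q.coeff 0 + 3 * Q.coeff 1 := by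
  simp [add_mul, mul_assoc, coeff_X_pow_mul', coeff_ofNat_mul]

theorem coeff_X_sq_add_three_mul_X_add_three_mul_add_two (k : ℕ) :
    ((X ^ 2 + 3 * X + 3) * Q).coeff (k + 2) =
      Q.coeff k + 3 * Q.coeff (k + 1) + 3 * Q.coeff (k + 2) := by
  simp [add_mul, mul_assoc, coeff_X_pow_mul', coeff_ofNat_mul]

end Quadratic

noncomputable def digitPoly (n : ℕ) (a : ℕ → ℤ) (ε : ℤ) : ℤ[X] :=
  C (-1) + ∑ j ∈ Finset.Ico 1 n, C (a j) * X ^ j + C ε * X ^ n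

section DigitPoly

variable {n : ℕ} {a : ℕ → ℤ} {ε : ℤ}

theorem coeff_digitPoly_sub_two (k : ℕ) :
    (digitPoly n a ε - 2).coeff k =
      (if k = 0 then -3 else 0) + (if k ∈ Finset.Ico 1 n then a k else 0) +
        (if k = n then ε else 0) := by
  rw [← C_ofNat]
  simp only [digitPoly, coeff_sub, coeff_add, coeff_C, finsetSum_coeff, coeff_C_mul_X_pow,
    Finset.sum_ite_eq]
  split_ifs <;> simp_all; ring

theorem coeff_digitPoly_sub_two_zero (hn : 1 ≤ n) : (digitPoly n a ε - 2).coeff 0 = -3 := by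
  rw [coeff_digitPoly_sub_two]
  simp [show 0 ≠ n by omega]

theorem coeff_digitPoly_sub_two_of_mem {k : ℕ} (hk : k ∈ Finset.Ico 1 n) :
    (digitPoly n a ε - 2).coeff k = a k := by
  rw [Finset.mem_Ico] at hk
  rw [coeff_digitPoly_sub_two]
  simp [hk, show k ≠ 0 by omega, show k ≠ n by omega]

theorem coeff_digitPoly_sub_two_of_lt {k : ℕ} (hk : n < k) :
    (digitPoly n a ε - 2).coeff k = 0 := by
  rw [coeff_digitPoly_sub_two]
  simp [show k ≠ 0 by omega, show k ≠ n by omega, hk.not_gt]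

end DigitPoly

theorem coeff_eq_neg_one_pow_of_X_sq_add_three_X_add_three_mul_eq {Q P : ℤ[X]} {n : ℕ}
    (hQ : (X ^ 2 + 3 * X + 3) * Q = P) (h0 : P.coeff 0 = -3)
    (hdigit : ∀ k ∈ Finset.Ico 1 n, P.coeff k = -1 ∨ P.coeff k = 0 ∨ P.coeff k = 1) :
    ∀ k < n, Q.coeff k = (-1) ^ (k + 1) := by
  intro k
  induction k using Nat.strong_induction_on with
  | _ k ih =>
    intro hk
    match k with
    | 0 =>
      have h := coeff_X_sq_add_three_mul_X_add_three_mul_zero Q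
      rw [hQ, h0] at h
      simp only [zero_add, pow_one]
      omega
    | 1 =>
      have hb₀ := ih 0 (by omega) (by omega)
      have h := coeff_X_sq_add_three_mul_X_add_three_mul_one Q
      rw [hQ] at h
      have := hdigit 1 (by simp; omega)
      norm_num at hb₀ ⊢
      omega
    | k + 2 =>
      have hb₀ := ih k (by omega) (by omega)
      have hb₁ := ih (k + 1) (by omega) (by omega)
      have h := coeff_X_sq_add_three_mul_X_add_three_mul_add_two Q k
      rw [hQ] at h
      have := hdigit (k + 2) (by simp; omega)
      rw [pow_succ _ (k + 1)] at hb₁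
      rw [pow_succ _ (k + 2), pow_succ _ (k + 1)]
      rcases neg_one_pow_eq_or ℤ (k + 1) with hs | hs <;> rw [hs] at hb₀ hb₁ ⊢ <;> omega

/-- There is no `P(X) = -1 + Σ_{j=1}^{n-1} a_j X^j + ε X^n` with
`a_j ∈ {-1,0,1}` and `ε = ±1` such that `X² + 3X + 3` divides `P(X) - 2`
in `ℤ[X]`. -/
theorem no_carry_polynomial_for_X_sq_add_three_X_add_three :
    ¬ ∃ (n : ℕ) (a : ℕ → ℤ) (ε : ℤ), 1 ≤ n ∧
      (∀ j, a j = -1 ∨ a j = 0 ∨ a j = 1) ∧ (ε = 1 ∨ ε = -1) ∧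
      ((X : Polynomial ℤ) ^ 2 + 3 * X + 3) ∣
        ((C (-1) + ∑ j ∈ Finset.Ico 1 n, C (a j) * X ^ j + C ε * X ^ n) - 2) := by
  rintro ⟨n, a, ε, hn, ha, -, hdvd⟩
  obtain ⟨Q, hQ⟩ : (X ^ 2 + 3 * X + 3) ∣ digitPoly n a ε - 2 := hdvd
  have hb := coeff_eq_neg_one_pow_of_X_sq_add_three_X_add_three_mul_eq hQ.symm
    (coeff_digitPoly_sub_two_zero hn) (fun k hk => coeff_digitPoly_sub_two_of_mem hk ▸ ha k)
    (n - 1) (by omega)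
  have htop := coeff_X_sq_add_three_mul_X_add_three_mul_add_two Q (n - 1)
  rw [show n - 1 + 2 = n + 1 by omega, show n - 1 + 1 = n by omega, ← hQ,
    coeff_digitPoly_sub_two_of_lt (Nat.lt_succ_self n)] at htop
  rw [show n - 1 + 1 = n by omega] at hb
  rcases neg_one_pow_eq_or ℤ n with hs | hs <;> rw [hs] at hb <;> omega
end

section
/- Suppose the monic quadratic q(x) = x² − bx + c ∈ ℤ[x] with b² − 4c < 0 divides P(X) − 2 for some P(X) = −1 + Σ_{j=1}^{n−1} a_j X^j + ε X^n with a_j ∈ {−1,0,1}, ε = ±1, and the roots of q are not roots of unity. Then c = 3 and b ∈ {−2,−1,0,1,2}, so the roots of q generate one of the imaginary quadratic fields ℚ(√−3), ℚ(√−11), ℚ(√−2). -/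
/-!
Evaluating at `0` shows that `c` divides the constant term `-3` of `P - 2`, and `c > 0` since the
discriminant is negative. For `c = 1` we have `b ∈ {-1, 0, 1}` and the roots are roots of unity.
For `c = 3` only `b = ±3` remains to be excluded. Modulo `3` the quadratic `q = X² ∓ 3X + 3` is
`X²`, so a multiple of `q` has its two lowest coefficients divisible by `3`. Adding a multiple of
`q` to `P - 2` and dividing by `X` produces a polynomial of the same shape (constant term `±3`,
all other coefficients in `{-1, 0, 1}`), still divisible by `q`, and of smaller degree: an
infinite descent.
-/

open Polynomial

namespace Polynomial

variable {R : Type*}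

theorem dvd_of_dvd_X_mul [CommRing R] [IsDomain R] {q w : R[X]} (hq : q.coeff 0 ≠ 0)
    (h : q ∣ X * w) : q ∣ w := by
  obtain ⟨t, ht⟩ := h
  have ht0 : t.coeff 0 = 0 := by
    have h0 := congrArg (coeff · 0) ht
    simp only [mul_coeff_zero, coeff_X_zero, zero_mul] at h0
    exact (mul_eq_zero.mp h0.symm).resolve_left hq
  obtain ⟨s, rfl⟩ := X_dvd_iff.mpr ht0
  exact ⟨s, mul_left_cancel₀ X_ne_zero (by rw [ht]; ring)⟩

theorem dvd_coeff_of_X_pow_add_C_mul_dvd [Semiring R] {m : R} {r w : R[X]} {k i : ℕ}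
    (hi : i < k) (h : X ^ k + C m * r ∣ w) : m ∣ w.coeff i := by
  obtain ⟨t, rfl⟩ := h
  rw [add_mul, coeff_add, coeff_X_pow_mul', if_neg (by omega), zero_add, mul_assoc, coeff_C_mul]
  exact dvd_mul_right _ _

theorem dvd_divX_sub_C_of_dvd_sub_C [CommRing R] [IsDomain R] {m σ δ : R} (hm : m ≠ 0)
    {p : R[X]} (hp0 : p.coeff 0 = 0) (h : X ^ 2 - C (m * σ) * X + C m ∣ p - C (m * δ)) :
    X ^ 2 - C (m * σ) * X + C m ∣ divX (p + C δ * X ^ 2) - C (m * (δ * σ)) := by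
  refine dvd_of_dvd_X_mul (by simpa using hm) ?_
  have hX : X * divX (p + C δ * X ^ 2) = p + C δ * X ^ 2 := by
    have h := X_mul_divX_add (p + C δ * X ^ 2)
    rwa [coeff_add, hp0, coeff_C_mul_X_pow, if_neg (by norm_num), add_zero, C_0, add_zero] at h
  have hsum : X * (divX (p + C δ * X ^ 2) - C (m * (δ * σ))) =
      (p - C (m * δ)) + C δ * (X ^ 2 - C (m * σ) * X + C m) := by
    rw [mul_sub, hX]
    simp only [map_mul]
    ring
  rw [hsum]
  exact dvd_add h (dvd_mul_left _ _)

end Polynomial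

section Descent

variable {m σ δ : ℤ} {p : ℤ[X]}

theorem coeff_one_eq_zero_and_coeff_two_eq_neg_of_dvd_sub_C (hm : 3 ≤ m) (hδ : IsUnit δ)
    (hp0 : p.coeff 0 = 0) (hp : ∀ i, |p.coeff i| ≤ 1)
    (hdvd : X ^ 2 - C (m * σ) * X + C m ∣ p - C (m * δ)) :
    p.coeff 1 = 0 ∧ p.coeff 2 = -δ := by
  have hq : X ^ 2 - C (m * σ) * X + C m = X ^ 2 + C m * (1 - C σ * X) := by
    simp only [map_mul]
    ring
  have hdvd' := hq ▸ dvd_divX_sub_C_of_dvd_sub_C (by omega) hp0 hdvd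
  have h0 := dvd_coeff_of_X_pow_add_C_mul_dvd (i := 0) (by norm_num) hdvd'
  have h1 := dvd_coeff_of_X_pow_add_C_mul_dvd (i := 1) (by norm_num) hdvd'
  simp only [coeff_sub, coeff_divX, coeff_add, coeff_C_mul_X_pow, coeff_C, zero_add,
    one_add_one_eq_two, if_true, if_false, one_ne_zero, add_zero, sub_zero,
    show (1 : ℕ) ≠ 2 by norm_num] at h0 h1
  have hδ1 : |δ| = 1 := Int.isUnit_iff_abs_eq.mp hδ
  constructor
  · refine Int.eq_zero_of_abs_lt_dvd ((dvd_sub_left (dvd_mul_right m _)).mp h0) ?_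
    linarith [hp 1]
  · have := Int.eq_zero_of_abs_lt_dvd h1 (by linarith [abs_add_le (p.coeff 2) δ, hp 2])
    omega

theorem not_dvd_sub_C_of_abs_coeff_le_one (hm : 3 ≤ m) (hσ : IsUnit σ) (hδ : IsUnit δ)
    (hp0 : p.coeff 0 = 0) (hp : ∀ i, |p.coeff i| ≤ 1) :
    ¬ X ^ 2 - C (m * σ) * X + C m ∣ p - C (m * δ) := by
  induction hd : p.natDegree using Nat.strong_induction_on generalizing p δ with
  | _ d ih =>
  intro hdvd
  obtain ⟨hc1, hc2⟩ := coeff_one_eq_zero_and_coeff_two_eq_neg_of_dvd_sub_C hm hδ hp0 hp hdvd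
  set p' := divX (p + C δ * X ^ 2) with hp'
  have hp'coeff (i : ℕ) : p'.coeff i = if i = 1 then 0 else p.coeff (i + 1) := by
    split_ifs with hi
    · simp [hp', coeff_divX, hi, hc2]
    · simp [hp', coeff_divX, hi]
  have hdeg : p'.natDegree < d := by
    have h2 : 2 ≤ p.natDegree := le_natDegree_of_ne_zero (by rw [hc2]; simpa using hδ.ne_zero)
    have hle : (p + C δ * X ^ 2).natDegree ≤ p.natDegree :=
      natDegree_add_le_of_degree_le le_rfl ((natDegree_C_mul_X_pow_le δ 2).trans h2)
    rw [hp', natDegree_divX_eq_natDegree_tsub_one]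
    omega
  refine ih _ hdeg (hδ.mul hσ) ?_ ?_ rfl (dvd_divX_sub_C_of_dvd_sub_C (by omega) hp0 hdvd)
  · simpa [hp'coeff] using hc1
  · intro i
    rw [hp'coeff]
    split_ifs
    · simp
    · exact hp _

end Descent

theorem pow_twelve_eq_one_of_sq_sub_mul_add_one_eq_zero {R : Type*} [CommRing R] {b : ℤ}
    (hb : b ^ 2 < 4) {z : R} (hz : z ^ 2 - b * z + 1 = 0) : z ^ 12 = 1 := by
  have hb' : b = -1 ∨ b = 0 ∨ b = 1 := by
    have : -2 < b ∧ b < 2 := ⟨by nlinarith, by nlinarith⟩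
    omega
  rcases hb' with rfl | rfl | rfl <;> push_cast at hz
  · linear_combination (z - 1) * (z ^ 9 + z ^ 6 + z ^ 3 + 1) * hz
  · linear_combination (z ^ 10 - z ^ 8 + z ^ 6 - z ^ 4 + z ^ 2 - 1) * hz
  · linear_combination (z + 1) * (z ^ 9 - z ^ 6 + z ^ 3 - 1) * hz

theorem Complex.exists_sq_sub_mul_add_eq_zero (b c : ℂ) : ∃ z : ℂ, z ^ 2 - b * z + c = 0 := by
  obtain ⟨z, hz⟩ := exists_quadratic_eq_zero one_ne_zero
    (IsAlgClosed.exists_eq_mul_self (discrim 1 (-b) c))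
  exact ⟨z, by linear_combination hz⟩

theorem exists_carry_polynomial_sub_two_eq_sub_three (n : ℕ) (a : ℕ → ℤ) (ε : ℤ)
    (hn : 1 ≤ n) (ha : ∀ j, a j = -1 ∨ a j = 0 ∨ a j = 1) (hε : ε = 1 ∨ ε = -1) :
    ∃ p : ℤ[X],
      C (-1) + ∑ j ∈ Finset.Ico 1 n, C (a j) * X ^ j + C ε * X ^ n - 2 = p - C 3 ∧
      p.coeff 0 = 0 ∧ ∀ i, |p.coeff i| ≤ 1 := by
  set p : ℤ[X] := ∑ j ∈ Finset.Ico 1 n, C (a j) * X ^ j + C ε * X ^ n with hp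
  have hpcoeff (i : ℕ) :
      p.coeff i = (if i ∈ Finset.Ico 1 n then a i else 0) + if i = n then ε else 0 := by
    simp [hp]
  refine ⟨p, ?_, by simp [hpcoeff]; omega, fun i => ?_⟩
  · rw [hp, map_neg, map_one, show (C 3 : ℤ[X]) = 3 from rfl]
    ring
  · rw [hpcoeff, abs_le]
    split_ifs with h1 h2 h2
    · simp at h1; omega
    · have := ha i; omega
    · omega
    · simp

/-- If a monic quadratic `q(x) = x² - bx + c ∈ ℤ[x]` with `b² - 4c < 0`, whose
complex roots are not roots of unity, divides `P(X) - 2` for some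
`P(X) = -1 + Σ_{j=1}^{n-1} a_j X^j + ε X^n` with `a_j ∈ {-1,0,1}`, `ε = ±1`,
then `c = 3` and `b ∈ {-2,-1,0,1,2}`. -/
theorem quadratic_divisor_of_carry_polynomial
    (b c : ℤ) (hdisc : b ^ 2 - 4 * c < 0)
    (hroots : ∀ z : ℂ, z ^ 2 - (b : ℂ) * z + (c : ℂ) = 0 →
      ∀ k : ℕ, 0 < k → z ^ k ≠ 1)
    (n : ℕ) (a : ℕ → ℤ) (ε : ℤ) (hn : 1 ≤ n)
    (ha : ∀ j, a j = -1 ∨ a j = 0 ∨ a j = 1) (hε : ε = 1 ∨ ε = -1)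
    (hdvd : ((X : Polynomial ℤ) ^ 2 - C b * X + C c) ∣
      ((C (-1) + ∑ j ∈ Finset.Ico 1 n, C (a j) * X ^ j + C ε * X ^ n) - 2)) :
    c = 3 ∧ (b = -2 ∨ b = -1 ∨ b = 0 ∨ b = 1 ∨ b = 2) := by
  obtain ⟨p, hF, hp0, hp⟩ := exists_carry_polynomial_sub_two_eq_sub_three n a ε hn ha hε
  rw [hF] at hdvd
  have hc3 : c ∣ 3 := by
    simpa [← coeff_zero_eq_eval_zero, hp0] using map_dvd (evalRingHom 0) hdvd
  have hc1 : c ≠ 1 := by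
    rintro rfl
    obtain ⟨z, hz⟩ := Complex.exists_sq_sub_mul_add_eq_zero b 1
    exact hroots z (by simpa using hz) 12 (by norm_num)
      (pow_twelve_eq_one_of_sq_sub_mul_add_one_eq_zero (by linarith) hz)
  obtain rfl : c = 3 := by
    have := Int.le_of_dvd (by norm_num) hc3
    have : 0 < c := by nlinarith [sq_nonneg b]
    interval_cases c <;> omega
  have hb : b ≠ 3 ∧ b ≠ -3 := by
    constructor <;> rintro rfl
    · exact not_dvd_sub_C_of_abs_coeff_le_one le_rfl isUnit_one isUnit_one hp0 hp
        (by simpa using hdvd)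
    · exact not_dvd_sub_C_of_abs_coeff_le_one (σ := -1) le_rfl isUnit_one.neg isUnit_one hp0 hp
        (by simpa using hdvd)
  have : -3 ≤ b ∧ b ≤ 3 := ⟨by nlinarith, by nlinarith⟩
  exact ⟨rfl, by omega⟩
end
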